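/- Let k be a field, n a positive natural number, and R = k[[X_0,…,X_{n−1}]] the ring of formal power series in n variables over k. Let m be an index, and let a, b : Fin n → ℕ satisfy b ≤ a componentwise and a_m = b_m = 0. If the ideal of R generated by X^a and X^b·X_m is principal, then a = b. -/

import Mathlib

/-!
In a local ring a two-generated principal ideal is generated by one of its generators, so one of
`X^a`, `X^b X_m` divides the other. Divisibility of monomials is the componentwise order on
exponents: `X^b X_m ∣ X^a` fails at the coordinate `m`, and `X^a ∣ X^b X_m` gives `a ≤ b` away
from `m`.
-/

open MvPowerSeries

theorem IsLocalRing.dvd_or_dvd_of_isPrincipal_span_pair {R : Type*} [CommRing R] [IsLocalRing R]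
    {u v : R} (h : (Ideal.span {u, v}).IsPrincipal) : u ∣ v ∨ v ∣ u := by
  obtain ⟨g, hg⟩ := h
  have hg : Ideal.span {u, v} = Ideal.span {g} := hg
  obtain ⟨p, rfl⟩ : g ∣ u := Ideal.mem_span_singleton.mp (hg ▸ Ideal.subset_span (by simp))
  obtain ⟨q, rfl⟩ : g ∣ v := Ideal.mem_span_singleton.mp (hg ▸ Ideal.subset_span (by simp))
  obtain ⟨s, t, hst⟩ := Ideal.mem_span_pair.mp (hg ▸ Ideal.mem_span_singleton_self g)
  -- `g = g * (s * p + t * q)`: either a cofactor is a unit, or `g` is killed by a unit.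
  rcases isUnit_or_isUnit_one_sub_self (s * p + t * q) with hunit | hunit
  · rcases isUnit_or_isUnit_of_isUnit_add hunit with hsp | htq
    · exact .inl ((isUnit_of_mul_isUnit_right hsp).mul_right_dvd.mpr (dvd_mul_right g q))
    · exact .inr ((isUnit_of_mul_isUnit_right htq).mul_right_dvd.mpr (dvd_mul_right g p))
  · obtain rfl : g = 0 := hunit.mul_left_eq_zero.mp (by linear_combination -hst)
    simp

namespace MvPowerSeries

variable {σ R : Type*} [CommSemiring R]

theorem monomial_one_dvd_monomial_one_iff [Nontrivial R] {e f : σ →₀ ℕ} :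
    monomial e (1 : R) ∣ monomial f 1 ↔ e ≤ f := by
  refine ⟨fun ⟨φ, hφ⟩ => ?_, fun hef => ⟨monomial (f - e) 1, ?_⟩⟩
  · by_contra hef
    have hcoeff := congrArg (coeff f) hφ
    rw [coeff_monomial_same, coeff_monomial_mul, if_neg hef] at hcoeff
    exact one_ne_zero hcoeff
  · rw [monomial_mul_monomial, add_tsub_cancel_of_le hef, one_mul]

theorem prod_X_pow_eq_monomial [Fintype σ] (a : σ → ℕ) :
    ∏ i, (X i : MvPowerSeries σ R) ^ a i = monomial (Finsupp.equivFunOnFinite.symm a) 1 := by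
  rw [monomial_one_eq, Finsupp.prod_fintype _ _ fun _ => pow_zero _]
  rfl

end MvPowerSeries

theorem stmt_15_general (k : Type*) [Field k] (n : ℕ) (m : Fin n)
    (a b : Fin n → ℕ) (hba : ∀ i, b i ≤ a i) (ham : a m = 0)
    (h : (Ideal.span {∏ i, (MvPowerSeries.X i : MvPowerSeries (Fin n) k) ^ a i,
        (∏ i, (MvPowerSeries.X i : MvPowerSeries (Fin n) k) ^ b i) *
          MvPowerSeries.X m}).IsPrincipal) :
    a = b := by
  set B := Finsupp.equivFunOnFinite.symm b + Finsupp.single m 1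
  have hv : (∏ i, (X i : MvPowerSeries (Fin n) k) ^ b i) * X m = monomial B 1 := by
    rw [prod_X_pow_eq_monomial, X, monomial_mul_monomial, one_mul]
  rw [prod_X_pow_eq_monomial, hv] at h
  rcases IsLocalRing.dvd_or_dvd_of_isPrincipal_span_pair h with hu_dvd | hv_dvd
  · rw [monomial_one_dvd_monomial_one_iff] at hu_dvd
    funext i
    refine le_antisymm ?_ (hba i)
    rcases eq_or_ne i m with rfl | him
    · simp [ham]
    · simpa [B, Finsupp.single_apply, him.symm] using hu_dvd i
  · rw [monomial_one_dvd_monomial_one_iff] at hv_dvd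
    simpa [B, ham] using hv_dvd m

/-- In `R = k[[X_0, …, X_{n-1}]]` over a field `k`, let `b ≤ a` componentwise with
`a m = b m = 0`. If the ideal generated by `X^a` and `X^b · X_m` is principal,
then `a = b`. -/
theorem stmt_15 (k : Type*) [Field k] (n : ℕ) (hn : 0 < n) (m : Fin n)
    (a b : Fin n → ℕ) (hba : ∀ i, b i ≤ a i) (ham : a m = 0) (hbm : b m = 0)
    (h : (Ideal.span {∏ i, (MvPowerSeries.X i : MvPowerSeries (Fin n) k) ^ a i,
        (∏ i, (MvPowerSeries.X i : MvPowerSeries (Fin n) k) ^ b i) *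
          MvPowerSeries.X m}).IsPrincipal) :
    a = b :=
  stmt_15_general k n m a b hba ham h
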